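/- arXiv:2107.02883 — 2 statements merged into one kernel-verified Lean document; each statement's English description precedes it below -/
import Mathlib

section
/- Let d ≥ 2, set D := max{1, d−2}, r > 0, and let h : [0, r] → ℝ≥0 be increasing with ∫₀^r h(t)/t^{d-1} dt < ∞ and h(0) = 0. Then D·∫₀^r h(t)/t^{d-1} dt = ∫₀^r (k_{d-2}(r) − k_{d-2}(t)) dh(t) (integration by parts identity for the kernel k_{d-2}). -/
/-!
Since `k_{d-2}' = D / t^(d-1)`, the kernel difference is `k(r) - k(t) = ∫_{(t,r]} D / s^(d-1) ds`.
Tonelli exchanges the `dh(t)` and `ds` integrals, and the inner integral becomes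
`h((0,s)) = h(s⁻) - h(0) = h(s)` for almost every `s`. Monotonicity and `h 0 = 0` make every
integrand nonnegative, so this is an identity of lower Lebesgue integrals, of which both Bochner
integrals are the real parts.
-/

open MeasureTheory Set Filter

/-- The kernel `k_{d-2}`: `log t` when `d = 2` and `-1/t^(d-2)` when `d > 2`. -/
noncomputable def kk (d : ℕ) (t : ℝ) : ℝ := if d = 2 then Real.log t else -1 / t ^ (d - 2)

open scoped ENNReal

theorem StieltjesFunction.lintegral_Ioc_lintegral_Ioc (f : StieltjesFunction ℝ) {μ : Measure ℝ}
    [SFinite μ] [NullSingletonClass μ] {g : ℝ → ℝ≥0∞} (hg : Measurable g) (a b : ℝ) :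
    ∫⁻ t in Ioc a b, ∫⁻ s in Ioc t b, g s ∂μ ∂f.measure
      = ∫⁻ s in Ioc a b, ENNReal.ofReal (f s - f a) * g s ∂μ := by
  set F : ℝ → ℝ → ℝ≥0∞ := fun t s => if t < s then g s else 0
  have hF : Measurable (Function.uncurry F) :=
    Measurable.ite (measurableSet_lt measurable_fst measurable_snd) (hg.comp measurable_snd)
      measurable_const
  have h_tail : ∀ t ∈ Ioc a b, ∫⁻ s in Ioc t b, g s ∂μ = ∫⁻ s in Ioc a b, F t s ∂μ := by
    intro t ht
    have : F t = (Ioi t).indicator g := by ext s; simp [F, indicator_apply]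
    have h_set : Ioi t ∩ Ioc a b = Ioc t b := by
      ext x; simp only [mem_inter_iff, mem_Ioi, mem_Ioc]; grind
    rw [this, lintegral_indicator (_root_.measurableSet_Ioi),
      Measure.restrict_restrict (_root_.measurableSet_Ioi), h_set]
  -- `f.measure (Ioo a s)` sees `leftLim f s`; it differs from `f s` only at the countably many jumps.
  have h_left_lim : ∀ᵐ s ∂μ, Function.leftLim f s = f s :=
    measure_mono_null (fun _ hs => hs) (f.countable_leftLim_ne.measure_zero μ)
  have h_head : ∀ᵐ s ∂μ, s ∈ Ioc a b →
      ∫⁻ t in Ioc a b, F t s ∂f.measure = ENNReal.ofReal (f s - f a) * g s := by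
    filter_upwards [h_left_lim] with s hs hsab
    have : (fun t => F t s) = (Iio s).indicator fun _ => g s := by
      ext t; simp [F, indicator_apply]
    have h_set : Iio s ∩ Ioc a b = Ioo a s := by
      ext x; simp only [mem_inter_iff, mem_Iio, mem_Ioo, mem_Ioc]; grind
    rw [this, lintegral_indicator (_root_.measurableSet_Iio),
      Measure.restrict_restrict (_root_.measurableSet_Iio), h_set, setLIntegral_const, mul_comm,
      f.measure_Ioo, hs]
  calc ∫⁻ t in Ioc a b, ∫⁻ s in Ioc t b, g s ∂μ ∂f.measure
      = ∫⁻ t in Ioc a b, ∫⁻ s in Ioc a b, F t s ∂μ ∂f.measure :=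
        setLIntegral_congr_fun measurableSet_Ioc h_tail
    _ = ∫⁻ s in Ioc a b, ∫⁻ t in Ioc a b, F t s ∂f.measure ∂μ :=
        lintegral_lintegral_swap hF.aemeasurable
    _ = ∫⁻ s in Ioc a b, ENNReal.ofReal (f s - f a) * g s ∂μ :=
        setLIntegral_congr_fun_ae measurableSet_Ioc h_head

theorem integrableOn_Ioc_div_pow (c : ℝ) (n : ℕ) {t : ℝ} (ht : 0 < t) (r : ℝ) :
    IntegrableOn (fun s : ℝ => c / s ^ n) (Ioc t r) :=
  (continuousOn_const.div (by fun_prop) fun s hs => pow_ne_zero _ (ht.trans_le hs.1).ne'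
    : ContinuousOn (fun s : ℝ => c / s ^ n) (Icc t r)).integrableOn_Icc.mono_set Ioc_subset_Icc_self

theorem kk_hasDerivAt {d : ℕ} (hd : 2 ≤ d) {t : ℝ} (ht : 0 < t) :
    HasDerivAt (kk d) (((max 1 (d - 2) : ℕ) : ℝ) / t ^ (d - 1)) t := by
  obtain rfl | hd2 := hd.eq_or_lt
  · have : kk 2 = Real.log := by ext; simp [kk]
    simpa [this] using Real.hasDerivAt_log ht.ne'
  · have hk : kk d = fun x : ℝ => -(x ^ (d - 2))⁻¹ := by
      ext x; simp [kk, hd2.ne', neg_div]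
    have h_max : max 1 (d - 2) = d - 2 := max_eq_right (by omega)
    have h_pow : (t ^ (d - 2)) ^ 2 = t ^ (d - 1) * t ^ (d - 2 - 1) := by
      rw [← pow_mul, ← pow_add]; congr 1; omega
    have ht' : t ^ (d - 2 - 1) ≠ 0 := pow_ne_zero _ ht.ne'
    rw [hk]
    refine ((hasDerivAt_pow (d - 2) t).inv (pow_ne_zero _ ht.ne')).neg.congr_deriv ?_
    rw [h_max, neg_div, neg_neg, h_pow, mul_div_mul_right _ _ ht']

theorem kk_sub_eq_integral {d : ℕ} (hd : 2 ≤ d) {t r : ℝ} (ht : 0 < t) (htr : t ≤ r) :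
    kk d r - kk d t = ∫ s in Ioc t r, ((max 1 (d - 2) : ℕ) : ℝ) / s ^ (d - 1) := by
  rw [← intervalIntegral.integral_of_le htr]
  refine (intervalIntegral.integral_eq_sub_of_hasDerivAt (fun s hs => ?_)
    ((intervalIntegrable_iff_integrableOn_Ioc_of_le htr).2
      (integrableOn_Ioc_div_pow _ _ ht r))).symm
  rw [uIcc_of_le htr] at hs
  exact kk_hasDerivAt hd (ht.trans_le hs.1)

theorem ofReal_kk_sub_eq_lintegral {d : ℕ} (hd : 2 ≤ d) {t r : ℝ} (ht : 0 < t) (htr : t ≤ r) :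
    ENNReal.ofReal (kk d r - kk d t)
      = ∫⁻ s in Ioc t r, ENNReal.ofReal (((max 1 (d - 2) : ℕ) : ℝ) / s ^ (d - 1)) := by
  rw [kk_sub_eq_integral hd ht htr,
    ofReal_integral_eq_lintegral_ofReal (integrableOn_Ioc_div_pow _ _ ht r)]
  filter_upwards [ae_restrict_mem measurableSet_Ioc] with s hs
  exact div_nonneg (Nat.cast_nonneg _) (pow_nonneg (ht.trans hs.1).le _)

@[fun_prop]
theorem measurable_kk (d : ℕ) : Measurable (kk d) := by
  unfold kk
  split_ifs <;> fun_prop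

theorem stmt5_general (d : ℕ) (hd : 2 ≤ d) (r : ℝ) (h : StieltjesFunction ℝ)
    (h0 : h 0 = 0) :
    (max 1 (d - 2) : ℕ) * ∫ t in Set.Ioc (0 : ℝ) r, h t / t ^ (d - 1)
      = ∫ t in Set.Ioc (0 : ℝ) r, (kk d r - kk d t) ∂h.measure := by
  set D : ℝ := ((max 1 (d - 2) : ℕ) : ℝ)
  have h_nonneg : ∀ t, 0 ≤ t → 0 ≤ h t := fun t ht => h0 ▸ h.mono ht
  have h_meas : Measurable h := h.mono.measurable
  rw [← integral_const_mul, integral_eq_lintegral_of_nonneg_ae ?_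
      (Measurable.aestronglyMeasurable (by fun_prop)),
    integral_eq_lintegral_of_nonneg_ae ?_ (by fun_prop)]
  · congr 1
    rw [setLIntegral_congr_fun measurableSet_Ioc fun t ht => ofReal_kk_sub_eq_lintegral hd ht.1 ht.2,
      h.lintegral_Ioc_lintegral_Ioc (by fun_prop)]
    refine setLIntegral_congr_fun measurableSet_Ioc fun s hs => ?_
    rw [h0, sub_zero, ← ENNReal.ofReal_mul (h_nonneg s hs.1.le), mul_div_left_comm]
  · filter_upwards [ae_restrict_mem measurableSet_Ioc] with t ht
    rw [Pi.zero_apply, kk_sub_eq_integral hd ht.1 ht.2]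
    exact setIntegral_nonneg measurableSet_Ioc fun s hs =>
      div_nonneg (Nat.cast_nonneg _) (pow_nonneg (ht.1.trans hs.1).le _)
  · filter_upwards [ae_restrict_mem measurableSet_Ioc] with t ht
    exact mul_nonneg (Nat.cast_nonneg _) (div_nonneg (h_nonneg t ht.1.le) (pow_nonneg ht.1.le _))

/-- Integration-by-parts identity: for a nonnegative increasing (Stieltjes) function `h`
on `[0, r]` with `h 0 = 0` and `∫₀^r h(t)/t^(d-1) dt < ∞`, one has
`D·∫₀^r h(t)/t^(d-1) dt = ∫₀^r (k_{d-2}(r) − k_{d-2}(t)) dh(t)` with `D = max 1 (d-2)`. -/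
theorem stmt5 (d : ℕ) (hd : 2 ≤ d) (r : ℝ) (hr : 0 < r) (h : StieltjesFunction ℝ)
    (hpos : ∀ t ∈ Set.Icc (0 : ℝ) r, 0 ≤ h t) (h0 : h 0 = 0)
    (hint : MeasureTheory.IntegrableOn (fun t => h t / t ^ (d - 1)) (Set.Ioc (0 : ℝ) r)) :
    (max 1 (d - 2) : ℕ) * ∫ t in Set.Ioc (0 : ℝ) r, h t / t ^ (d - 1)
      = ∫ t in Set.Ioc (0 : ℝ) r, (kk d r - kk d t) ∂h.measure :=
  stmt5_general d hd r h h0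
end

section
/- Let d ≥ 2 and μ a Borel measure on B̄(0, r) ⊂ ℝ^d. If there exist r₀ > 0 and R > r with sup_{y ∈ B̄(0, R)} N_y^μ(r₀) < ∞, then the Riesz potential pt_μ(y) = ∫ k_{d-2}(|x − y|) dμ(x) is bounded below on all of ℝ^d. -/
/-!
On `(0, ∞)` the kernel satisfies `kk' = D / s^(d-1)` with `D = max 1 (d - 2)`. For `0 < t₀ ≤ 1`
the fundamental theorem of calculus gives
`(kk t₀ - kk ‖x - y‖)⁺ ≤ D ∫_{(0, t₀]} 1{‖x - y‖ ≤ s} s^(1-d) ds`, and integrating in `x` by Tonelli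
turns the right-hand side into `N_y^μ(t₀)`. Hence `pt_μ(y) ≥ kk t₀ · μ(ℝ^d) - N_y^μ(t₀)`.
Taking `t₀ ≤ R - r` makes `N_y^μ(t₀)` vanish for `‖y‖ > R`, so the hypothesis bounds it for every `y`;
the same bound gives finite mass to small balls centred on the compact support, so `μ` is finite.
-/

open MeasureTheory Set Filter Metric ENNReal

/-- `d`-dimensional Euclidean space. -/
abbrev Eucl (d : ℕ) := EuclideanSpace ℝ (Fin d)

/-- Integrated radial counting function
`N_y^μ(t) := max{1, d-2} · ∫₀^t μ(B̄(y, s))/s^(d-1) ds` (valued in `ℝ≥0∞`). -/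
noncomputable def Nmu (d : ℕ) (μ : Measure (Eucl d)) (y : Eucl d) (t : ℝ) : ℝ≥0∞ :=
  (max 1 (d - 2) : ℕ) *
    ∫⁻ s in Set.Ioc (0 : ℝ) t, μ (Metric.closedBall y s) / ENNReal.ofReal (s ^ (d - 1))

/-- Potential of a measure: `pt_μ(y) := ∫ k_{d-2}(|x − y|) dμ(x)`. -/
noncomputable def ptMu (d : ℕ) (μ : Measure (Eucl d)) (y : Eucl d) : ℝ :=
  ∫ x, kk d ‖x - y‖ ∂μ

lemma kk_zero {d : ℕ} (hd : 2 ≤ d) : kk d 0 = 0 := by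
  unfold kk
  split_ifs
  · exact Real.log_zero
  · rw [zero_pow (by omega), _root_.div_zero]

lemma kk_nonpos (d : ℕ) {t : ℝ} (ht : 0 ≤ t) (ht1 : t ≤ 1) : kk d t ≤ 0 := by
  unfold kk
  split_ifs
  · exact Real.log_nonpos ht ht1
  · rw [neg_div, neg_nonpos]
    positivity

lemma kk_le_kk (d : ℕ) {a b : ℝ} (ha : 0 < a) (hab : a ≤ b) : kk d a ≤ kk d b := by
  unfold kk
  split_ifs
  · exact Real.log_le_log ha hab
  · rw [neg_div, neg_div, neg_le_neg_iff]
    exact one_div_le_one_div_of_le (by positivity) (pow_le_pow_left₀ ha.le hab _)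

lemma hasDerivAt_kk {d : ℕ} (hd : 2 ≤ d) {s : ℝ} (hs : 0 < s) :
    HasDerivAt (kk d) (((max 1 (d - 2) : ℕ) : ℝ) / s ^ (d - 1)) s := by
  rcases hd.eq_or_lt with rfl | hd
  · have hlog : kk 2 = Real.log := funext fun t => if_pos rfl
    simpa [hlog] using Real.hasDerivAt_log hs.ne'
  · have hzpow : kk d = fun t => -t ^ (-((d - 2 : ℕ) : ℤ)) := by
      funext t
      rw [kk, if_neg hd.ne', zpow_neg, zpow_natCast, neg_div, one_div]
    rw [hzpow]
    refine (hasDerivAt_zpow (-((d - 2 : ℕ) : ℤ)) s (Or.inl hs.ne')).neg.congr_deriv ?_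
    have hmax : max 1 (d - 2) = d - 2 := by omega
    have hexp : -((d - 2 : ℕ) : ℤ) - 1 = -((d - 1 : ℕ) : ℤ) := by omega
    rw [hmax, hexp, zpow_neg, zpow_natCast]
    push_cast
    ring

lemma ofReal_kk_sub_kk {d : ℕ} (hd : 2 ≤ d) {t t₀ : ℝ} (ht : 0 < t) (htt : t ≤ t₀) :
    ENNReal.ofReal (kk d t₀ - kk d t) =
      ((max 1 (d - 2) : ℕ) : ℝ≥0∞) * ∫⁻ s in Ioc t t₀, (ENNReal.ofReal (s ^ (d - 1)))⁻¹ := by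
  have hpos : ∀ s ∈ Icc t t₀, 0 < s ^ (d - 1) := fun s hs => pow_pos (ht.trans_le hs.1) _
  have hcont : ContinuousOn (fun s : ℝ => ((max 1 (d - 2) : ℕ) : ℝ) / s ^ (d - 1)) (Icc t t₀) :=
    continuousOn_const.div (continuousOn_pow _) fun s hs => (hpos s hs).ne'
  have hderiv : ∀ s ∈ uIcc t t₀,
      HasDerivAt (kk d) (((max 1 (d - 2) : ℕ) : ℝ) / s ^ (d - 1)) s := by
    rw [uIcc_of_le htt]
    exact fun s hs => hasDerivAt_kk hd (ht.trans_le hs.1)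
  rw [← intervalIntegral.integral_eq_sub_of_hasDerivAt hderiv
      (hcont.intervalIntegrable_of_Icc htt), intervalIntegral.integral_of_le htt,
    ofReal_integral_eq_lintegral_ofReal (hcont.integrableOn_Icc.mono_set Ioc_subset_Icc_self)
      ((ae_restrict_iff' measurableSet_Ioc).2 (.of_forall fun s hs =>
        (div_pos (by positivity) (hpos s (Ioc_subset_Icc_self hs))).le)),
    ← lintegral_const_mul' _ _ (natCast_ne_top _)]
  refine setLIntegral_congr_fun measurableSet_Ioc fun s hs => ?_
  rw [ENNReal.ofReal_div_of_pos (hpos s (Ioc_subset_Icc_self hs)), ofReal_natCast, div_eq_mul_inv]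

lemma ofReal_kk_sub_le {d : ℕ} (hd : 2 ≤ d) {t t₀ : ℝ} (ht : 0 ≤ t) (ht₀ : 0 < t₀)
    (ht₀1 : t₀ ≤ 1) :
    ENNReal.ofReal (kk d t₀ - kk d t) ≤ ((max 1 (d - 2) : ℕ) : ℝ≥0∞) *
      ∫⁻ s in Ioc 0 t₀, (Ici t).indicator (fun s => (ENNReal.ofReal (s ^ (d - 1)))⁻¹) s := by
  rcases ht.eq_or_lt with rfl | ht
  · -- the junk value `kk d 0 = 0` lies above `kk d t₀`
    rw [kk_zero hd, sub_zero, ofReal_of_nonpos (kk_nonpos d ht₀.le ht₀1)]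
    exact zero_le
  rcases le_or_gt t t₀ with htt | htt
  · rw [ofReal_kk_sub_kk hd ht htt, lintegral_indicator measurableSet_Ici,
      Measure.restrict_restrict measurableSet_Ici]
    gcongr
    exact fun s hs => ⟨hs.1.le, ht.trans hs.1, hs.2⟩
  · rw [ofReal_of_nonpos (sub_nonpos.2 (kk_le_kk d ht₀ htt.le))]
    exact zero_le

section Nmu

variable {d : ℕ} {μ : Measure (Eucl d)} {y : Eucl d}

lemma Nmu_mono {t t' : ℝ} (h : t ≤ t') : Nmu d μ y t ≤ Nmu d μ y t' :=
  mul_le_mul_right (lintegral_mono_set (Ioc_subset_Ioc_right h)) _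

lemma Nmu_eq_lintegral [SFinite μ] (t : ℝ) :
    Nmu d μ y t = ((max 1 (d - 2) : ℕ) : ℝ≥0∞) * ∫⁻ x, (∫⁻ s in Ioc 0 t,
      (Ici ‖x - y‖).indicator (fun s => (ENNReal.ofReal (s ^ (d - 1)))⁻¹) s) ∂μ := by
  have hmeas : Measurable fun p : Eucl d × ℝ =>
      (Ici ‖p.1 - y‖).indicator (fun s => (ENNReal.ofReal (s ^ (d - 1)))⁻¹) p.2 := by
    have hset : MeasurableSet {p : Eucl d × ℝ | ‖p.1 - y‖ ≤ p.2} :=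
      measurableSet_le (by fun_prop) measurable_snd
    exact ((measurable_snd.pow_const _).ennreal_ofReal.inv).indicator hset
  rw [Nmu, lintegral_lintegral_swap hmeas.aemeasurable]
  congr 1
  refine lintegral_congr fun s => ?_
  have hind : (fun x => (Ici ‖x - y‖).indicator (fun s => (ENNReal.ofReal (s ^ (d - 1)))⁻¹) s) =
      (closedBall y s).indicator fun _ => (ENNReal.ofReal (s ^ (d - 1)))⁻¹ := by
    ext x
    simp only [indicator, mem_Ici, mem_closedBall, dist_eq_norm]
  rw [hind, lintegral_indicator_const measurableSet_closedBall, div_eq_mul_inv, mul_comm]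

lemma lintegral_ofReal_kk_sub_le_Nmu [SFinite μ] (hd : 2 ≤ d) {t₀ : ℝ} (ht₀ : 0 < t₀)
    (ht₀1 : t₀ ≤ 1) :
    ∫⁻ x, ENNReal.ofReal (kk d t₀ - kk d ‖x - y‖) ∂μ ≤ Nmu d μ y t₀ := by
  rw [Nmu_eq_lintegral, ← lintegral_const_mul' _ _ (natCast_ne_top _)]
  exact lintegral_mono fun x => ofReal_kk_sub_le hd (norm_nonneg _) ht₀ ht₀1

lemma kk_mul_measureReal_sub_le_ptMu [IsFiniteMeasure μ] (hd : 2 ≤ d) {t₀ : ℝ} (ht₀ : 0 < t₀)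
    (ht₀1 : t₀ ≤ 1) {C : ℝ≥0∞} (hC : C ≠ ⊤) (hN : Nmu d μ y t₀ ≤ C) :
    kk d t₀ * μ.real univ - C.toReal ≤ ptMu d μ y := by
  by_cases hint : Integrable (fun x => kk d ‖x - y‖) μ
  · have hneg : (∫⁻ x, ENNReal.ofReal (-(kk d ‖x - y‖ - kk d t₀)) ∂μ).toReal ≤ C.toReal := by
      simp only [neg_sub]
      exact toReal_mono hC ((lintegral_ofReal_kk_sub_le_Nmu hd ht₀ ht₀1).trans hN)
    have hsplit := integral_eq_lintegral_pos_part_sub_lintegral_neg_part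
      (hint.sub (integrable_const (kk d t₀)))
    simp only [Pi.sub_apply] at hsplit
    rw [integral_sub hint (integrable_const _), integral_const, smul_eq_mul] at hsplit
    rw [ptMu]
    linarith [toReal_nonneg (a := ∫⁻ x, ENNReal.ofReal (kk d ‖x - y‖ - kk d t₀) ∂μ)]
  · rw [ptMu, integral_undef hint]
    have := mul_nonpos_of_nonpos_of_nonneg (kk_nonpos d ht₀.le ht₀1) (measureReal_nonneg (μ := μ) (s := univ))
    linarith [toReal_nonneg (a := C)]

lemma measure_closedBall_ne_top_of_Nmu_ne_top {s t : ℝ} (hs : 0 ≤ s) (hst : s < t)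
    (hN : Nmu d μ y t ≠ ⊤) : μ (closedBall y s) ≠ ⊤ := by
  contrapose! hN
  rw [Nmu, ENNReal.mul_eq_top]
  refine Or.inl ⟨by simp, eq_top_iff.2 ?_⟩
  calc ⊤ = ∫⁻ _ in Ioc s t, (⊤ : ℝ≥0∞) := by
        rw [setLIntegral_const, Real.volume_Ioc, top_mul (ofReal_pos.2 (sub_pos.2 hst)).ne']
    _ ≤ ∫⁻ u in Ioc s t, μ (closedBall y u) / ENNReal.ofReal (u ^ (d - 1)) := by
        refine setLIntegral_mono' measurableSet_Ioc fun u hu => ?_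
        have hu_top : μ (closedBall y u) = ⊤ :=
          top_unique (hN ▸ measure_mono (closedBall_subset_closedBall hu.1.le))
        rw [hu_top, top_div_of_ne_top ofReal_ne_top]
    _ ≤ _ := lintegral_mono_set (Ioc_subset_Ioc_left hs)

lemma isFiniteMeasure_of_Nmu_ne_top {K : Set (Eucl d)} (hK : IsCompact K) (hsupp : μ Kᶜ = 0)
    {t : ℝ} (ht : 0 < t) (hN : ∀ y ∈ K, Nmu d μ y t ≠ ⊤) : IsFiniteMeasure μ := by
  have hKfin : μ K < ⊤ := hK.measure_lt_top_of_nhdsWithin fun y hy =>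
    ⟨closedBall y (t / 2), mem_nhdsWithin_of_mem_nhds (closedBall_mem_nhds y (half_pos ht)),
      (measure_closedBall_ne_top_of_Nmu_ne_top (half_pos ht).le (half_lt_self ht)
        (hN y hy)).lt_top⟩
  exact ⟨by rwa [← measure_congr (ae_eq_univ.2 hsupp)]⟩

lemma Nmu_eq_zero_of_add_lt_norm {r t : ℝ} (hsupp : μ (closedBall (0 : Eucl d) r)ᶜ = 0)
    (hy : r + t < ‖y‖) : Nmu d μ y t = 0 := by
  have hnull : ∀ s ∈ Ioc 0 t, μ (closedBall y s) = 0 := fun s hs =>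
    measure_mono_null (fun x hx => by
      have := dist_triangle y x 0
      simp only [mem_compl_iff, mem_closedBall, dist_zero_right] at hx this ⊢
      rw [dist_comm] at hx
      linarith [hs.2]) hsupp
  rw [Nmu, setLIntegral_congr_fun measurableSet_Ioc fun s hs => by rw [hnull s hs, ENNReal.zero_div],
    lintegral_zero, mul_zero]

end Nmu

theorem stmt12_general (d : ℕ) (hd : 2 ≤ d) (r : ℝ) (μ : Measure (Eucl d))
    (hsupp : μ (Metric.closedBall (0 : Eucl d) r)ᶜ = 0)
    (hsup : ∃ r₀ > (0 : ℝ), ∃ R > r, ∃ C : ℝ≥0∞, C < ⊤ ∧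
      ∀ y ∈ Metric.closedBall (0 : Eucl d) R, Nmu d μ y r₀ ≤ C) :
    ∃ c : ℝ, ∀ y : Eucl d, c ≤ ptMu d μ y := by
  obtain ⟨r₀, hr₀, R, hR, C, hC, hbound⟩ := hsup
  set t := min r₀ (min 1 (R - r))
  have ht : 0 < t := lt_min hr₀ (lt_min one_pos (sub_pos.2 hR))
  have ht1 : t ≤ 1 := (min_le_right _ _).trans (min_le_left _ _)
  have hN : ∀ y, Nmu d μ y t ≤ C := by
    intro y
    by_cases hy : y ∈ closedBall (0 : Eucl d) R
    · exact (Nmu_mono (min_le_left _ _)).trans (hbound y hy)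
    · have htR : t ≤ R - r := (min_le_right _ _).trans (min_le_right _ _)
      rw [mem_closedBall, dist_zero_right, not_le] at hy
      rw [Nmu_eq_zero_of_add_lt_norm hsupp (by linarith)]
      exact zero_le
  have := isFiniteMeasure_of_Nmu_ne_top (isCompact_closedBall 0 r) hsupp ht
    fun y _ => ne_top_of_le_ne_top hC.ne (hN y)
  exact ⟨_, fun y => kk_mul_measureReal_sub_le_ptMu hd ht ht1 hC.ne (hN y)⟩

theorem stmt12 (d : ℕ) (hd : 2 ≤ d) (r : ℝ) (hr : 0 < r) (μ : Measure (Eucl d))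
    (hsupp : μ (Metric.closedBall (0 : Eucl d) r)ᶜ = 0)
    (hsup : ∃ r₀ > (0 : ℝ), ∃ R > r, ∃ C : ℝ≥0∞, C < ⊤ ∧
      ∀ y ∈ Metric.closedBall (0 : Eucl d) R, Nmu d μ y r₀ ≤ C) :
    ∃ c : ℝ, ∀ y : Eucl d, c ≤ ptMu d μ y :=
  stmt12_general d hd r μ hsupp hsup
end
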